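/- arXiv:2310.14145 — 2 statements merged into one kernel-verified Lean document; each statement's English description precedes it below -/
import Mathlib

section
/- The group G satisfies the open set condition: for every g ∈ G there exists a word v ∈ {0,1}* such that the section g|_v is the identity automorphism. -/
namespace BVTree

/-- States of the automaton (generators, their inverses, and the identity). -/
inductive Q : Type
  | e | qa | qb | qc | qd | qa' | qb' | qc' | qd'
  deriving DecidableEq

open Q

/-- Output function of the automaton. -/
def Qout : Q → Bool → Bool
  | qa, x => !x
  | qa', x => !x
  | _, x => x

/-- Transition function of the automaton. -/
def Qtrans : Q → Bool → Q
  | qa, false => qd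
  | qa, true => e
  | qb, false => qa
  | qb, true => qc
  | qc, _ => qa
  | qd, false => e
  | qd, true => qb
  | qa', false => e
  | qa', true => qd'
  | qb', false => qa'
  | qb', true => qc'
  | qc', _ => qa'
  | qd', false => e
  | qd', true => qb'
  | e, _ => e

/-- The state corresponding to the inverse automorphism. -/
def Qinv : Q → Q
  | e => e
  | qa => qa' | qb => qb' | qc => qc' | qd => qd'
  | qa' => qa | qb' => qb | qc' => qc | qd' => qd

/-- The action of a state on finite binary words. -/
def act : Q → List Bool → List Bool
  | _, [] => []
  | q, x :: w => Qout q x :: act (Qtrans q x) w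

lemma act_inv (q : Q) : ∀ w, act (Qinv q) (act q w) = w := by
  intro w
  induction w generalizing q with
  | nil => rfl
  | cons x w ih =>
    have h1 : Qout (Qinv q) (Qout q x) = x := by cases q <;> cases x <;> rfl
    have h2 : Qtrans (Qinv q) (Qout q x) = Qinv (Qtrans q x) := by
      cases q <;> cases x <;> rfl
    simp [act, h1, h2, ih]

/-- The tree automorphism determined by a state of the automaton. -/
def aut (q : Q) : Equiv.Perm (List Bool) where
  toFun := act q
  invFun := act (Qinv q)
  left_inv := act_inv q
  right_inv := by
    intro w
    have h : Qinv (Qinv q) = q := by cases q <;> rfl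
    simpa [h] using act_inv (Qinv q) w

/-- The automorphism `a`: `a(0w) = 1·d(w)`, `a(1w) = 0·w`. -/
def a : Equiv.Perm (List Bool) := aut qa
/-- The automorphism `b`: `b(0w) = 0·a(w)`, `b(1w) = 1·c(w)`. -/
def b : Equiv.Perm (List Bool) := aut qb
/-- The automorphism `c`: `c(0w) = 0·a(w)`, `c(1w) = 1·a(w)`. -/
def c : Equiv.Perm (List Bool) := aut qc
/-- The automorphism `d`: `d(0w) = 0·w`, `d(1w) = 1·b(w)`. -/
def d : Equiv.Perm (List Bool) := aut qd

/-- The group `G` generated by `a`, `b`, `c`, `d`. -/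
def G : Subgroup (Equiv.Perm (List Bool)) := Subgroup.closure {a, b, c, d}


/-!
Every element of `G` is the action of a finite product of automaton states, and the section of
such a product at a vertex is the product of the sections of its factors. Each state reaches the
identity state `e` along a word of length at most two, and every section of `e` is `e`. So the
factors can be made trivial one at a time, starting with the one applied first: after the
factors applied before `q` are trivial at `v`, continuing `v` by a word that trivializes the
section of `q` at `v` keeps them trivial.
-/

/-- The action of a product of states; the head of the list acts last. -/
def actList : List Q → List Bool → List Bool
  | [], w => w
  | q :: L, w => act q (actList L w)

/-- The state reached from `q` after reading `v`, i.e. the section of `aut q` at `v`. -/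
def secState : Q → List Bool → Q
  | q, [] => q
  | q, x :: v => secState (Qtrans q x) v

/-- The factors of the section at `v` of the product `actList L`. -/
def secList : List Q → List Bool → List Q
  | [], _ => []
  | q :: L, v => secState q (actList L v) :: secList L v

lemma act_e (w : List Bool) : act e w = w := by
  induction w with
  | nil => rfl
  | cons x w ih => cases x <;> simp [act, Qout, Qtrans, ih]

lemma secState_e (v : List Bool) : secState e v = e := by
  induction v with
  | nil => rfl
  | cons x v ih => cases x <;> exact ih

lemma secState_append (q : Q) (u v : List Bool) :
    secState q (u ++ v) = secState (secState q u) v := by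
  induction u generalizing q with
  | nil => rfl
  | cons x u ih => exact ih _

lemma act_append (q : Q) (v w : List Bool) :
    act q (v ++ w) = act q v ++ act (secState q v) w := by
  induction v generalizing q with
  | nil => rfl
  | cons x v ih => simp [act, secState, ih]

lemma actList_append (A B : List Q) (w : List Bool) :
    actList (A ++ B) w = actList A (actList B w) := by
  induction A with
  | nil => rfl
  | cons q A ih => simp [actList, ih]

lemma actList_word_append (L : List Q) (v w : List Bool) :
    actList L (v ++ w) = actList L v ++ actList (secList L v) w := by
  induction L with
  | nil => rfl
  | cons q L ih => simp only [actList, secList, ih, act_append]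

lemma secList_word_append (L : List Q) (u v : List Bool) :
    secList L (u ++ v) = secList (secList L u) v := by
  induction L with
  | nil => rfl
  | cons q L ih => simp only [secList, ih, actList_word_append, secState_append]

lemma actList_replicate_e (n : ℕ) (w : List Bool) : actList (List.replicate n e) w = w := by
  induction n with
  | zero => rfl
  | succ n ih => simp [List.replicate_succ, actList, ih, act_e]

lemma secList_replicate_e (n : ℕ) (v : List Bool) :
    secList (List.replicate n e) v = List.replicate n e := by
  induction n with
  | zero => rfl
  | succ n ih => simp [List.replicate_succ, secList, ih, secState_e]

lemma actList_reverse_map_Qinv (L : List Q) (w : List Bool) :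
    actList (L.reverse.map Qinv) (actList L w) = w := by
  induction L generalizing w with
  | nil => rfl
  | cons q L ih =>
    simp only [List.reverse_cons, List.map_append, List.map_cons, List.map_nil, actList_append,
      actList, act_inv, ih]

def trivializingWord : Q → List Bool
  | e => []
  | qa => [true]
  | qb => [false, true]
  | qc => [false, true]
  | qd => [false]
  | qa' => [false]
  | qb' => [false, false]
  | qc' => [false, false]
  | qd' => [false]

lemma secState_trivializingWord (q : Q) : secState q (trivializingWord q) = e := by
  cases q <;> rfl

lemma exists_secList_eq_replicate_e (L : List Q) :
    ∃ v, secList L v = List.replicate L.length e := by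
  induction L with
  | nil => exact ⟨[], rfl⟩
  | cons q L ih =>
    obtain ⟨v, hv⟩ := ih
    set q' := secState q (actList L v)
    refine ⟨v ++ trivializingWord q', ?_⟩
    rw [secList_word_append, secList, hv, secList, actList_replicate_e, secList_replicate_e,
      secState_trivializingWord, List.length_cons, List.replicate_succ]

lemma exists_actList_eq_of_mem_G {g : Equiv.Perm (List Bool)} (hg : g ∈ G) :
    ∃ L : List Q, ⇑g = actList L := by
  induction hg using Subgroup.closure_induction with
  | mem x hx =>
    rcases hx with rfl | rfl | rfl | rfl
    · exact ⟨[qa], rfl⟩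
    · exact ⟨[qb], rfl⟩
    · exact ⟨[qc], rfl⟩
    · exact ⟨[qd], rfl⟩
  | one => exact ⟨[], rfl⟩
  | mul x y _ _ hx hy =>
    obtain ⟨L₁, h₁⟩ := hx
    obtain ⟨L₂, h₂⟩ := hy
    exact ⟨L₁ ++ L₂, funext fun w => by simp [h₁, h₂, actList_append]⟩
  | inv x _ hx =>
    obtain ⟨L, hL⟩ := hx
    refine ⟨L.reverse.map Qinv, funext fun w => ?_⟩
    simpa [← hL] using (actList_reverse_map_Qinv L (x⁻¹ w)).symm

/-- `G` satisfies the open set condition: every `g ∈ G` has a trivial section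
at some vertex. -/
theorem open_set_condition (g : Equiv.Perm (List Bool)) (hg : g ∈ G) :
    ∃ v : List Bool, ∀ w : List Bool, g (v ++ w) = g v ++ w := by
  obtain ⟨L, hL⟩ := exists_actList_eq_of_mem_G hg
  obtain ⟨v, hv⟩ := exists_secList_eq_replicate_e L
  exact ⟨v, fun w => by rw [hL, actList_word_append, hv, actList_replicate_e]⟩

end BVTree
end

section
/- The conjugates a⁻¹da and ada⁻¹ are nontrivial elements of the rigid stabilizer Rist_G(0): each of them fixes every word of {0,1}* beginning with the letter 1 (and also fixes the one-letter words), and neither equals the identity. Likewise d itself is a nontrivial element of Rist_G(1). -/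
/-!
The generator `d` acts trivially below `0` and moves `100` to `101`. Since `a` swaps the two
subtrees at the root (with sections `d` and `1`), conjugating by `a` or `a⁻¹` carries the part of
the tree below `1`, where `d` acts, to the part below `0`; the conjugates are nontrivial because
`d` is.
-/

namespace BVTree

open Q

open Q

theorem aut_cons (q : Q) (x : Bool) (w : List Bool) :
    aut q (x :: w) = Qout q x :: aut (Qtrans q x) w := rfl

theorem aut_inv (q : Q) : (aut q)⁻¹ = aut (Qinv q) := Equiv.ext fun _ => rfl

theorem aut_e : aut e = 1 := by
  ext w : 1
  induction w with
  | nil => rfl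
  | cons x w ih => simpa [aut_cons, Qout, Qtrans] using ih

theorem a_apply_false (w : List Bool) : a (false :: w) = true :: d w := rfl

theorem a_apply_true (w : List Bool) : a (true :: w) = false :: w := by
  simp [a, aut_cons, Qout, Qtrans, aut_e]

theorem a_inv_apply_false (w : List Bool) : a⁻¹ (false :: w) = true :: w := by
  simp [a, aut_inv, Qinv, aut_cons, Qout, Qtrans, aut_e]

theorem a_inv_apply_true (w : List Bool) : a⁻¹ (true :: w) = false :: d⁻¹ w := rfl

theorem a_apply_singleton (i : Bool) : a [i] = [!i] := by
  cases i <;> rfl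

theorem a_inv_apply_singleton (i : Bool) : a⁻¹ [i] = [!i] := by
  cases i <;> rfl

theorem d_apply_false (w : List Bool) : d (false :: w) = false :: w := by
  simp [d, aut_cons, Qout, Qtrans, aut_e]

theorem d_apply_singleton (i : Bool) : d [i] = [i] := by
  cases i <;> rfl

theorem d_ne_one : d ≠ 1 := fun h => by
  have : d [true, false, false] = [true, false, true] := rfl
  simp [h] at this

theorem d_apply_of_not_prefix {u : List Bool} (hu : ¬ [true] <+: u) : d u = u := by
  match u, hu with
  | [], _ => rfl
  | false :: w, _ => exact d_apply_false w
  | true :: w, hu => exact absurd ⟨w, rfl⟩ hu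

section Conjugation

variable {g : Equiv.Perm (List Bool)}

theorem a_inv_conj_apply_true_cons (hg : ∀ w, g (false :: w) = false :: w) (w : List Bool) :
    (a⁻¹ * g * a) (true :: w) = true :: w := by
  simp only [Equiv.Perm.mul_apply, a_apply_true, hg, a_inv_apply_false]

theorem a_conj_apply_true_cons (hg : ∀ w, g (false :: w) = false :: w) (w : List Bool) :
    (a * g * a⁻¹) (true :: w) = true :: w := by
  rw [Equiv.Perm.mul_apply, Equiv.Perm.mul_apply, a_inv_apply_true, hg, a_apply_false,
    Equiv.Perm.coe_inv, Equiv.apply_symm_apply]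

theorem a_inv_conj_apply_singleton (hg : ∀ w, g (false :: w) = false :: w)
    (hg₁ : g [true] = [true]) (i : Bool) : (a⁻¹ * g * a) [i] = [i] := by
  cases i
  · rw [Equiv.Perm.mul_apply, Equiv.Perm.mul_apply, a_apply_singleton, Bool.not_false, hg₁,
      a_inv_apply_singleton, Bool.not_true]
  · exact a_inv_conj_apply_true_cons hg []

theorem a_conj_apply_singleton (hg : ∀ w, g (false :: w) = false :: w)
    (hg₁ : g [true] = [true]) (i : Bool) : (a * g * a⁻¹) [i] = [i] := by
  cases i
  · rw [Equiv.Perm.mul_apply, Equiv.Perm.mul_apply, a_inv_apply_singleton, Bool.not_false, hg₁,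
      a_apply_singleton, Bool.not_true]
  · exact a_conj_apply_true_cons hg []

end Conjugation

/-- `a⁻¹da` and `ada⁻¹` are nontrivial elements of `Rist_G(0)`, and `d` is a
nontrivial element of `Rist_G(1)`. -/
theorem rigid_stabilizer_elements :
    (∀ g ∈ ({a⁻¹ * d * a, a * d * a⁻¹} : Set (Equiv.Perm (List Bool))),
      (∀ w : List Bool, g (true :: w) = true :: w) ∧
      (∀ i : Bool, g [i] = [i]) ∧ g ≠ 1) ∧
    ((∀ u : List Bool, ¬ ([true] <+: u) → d u = u) ∧ d ≠ 1) := by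
  refine ⟨?_, fun u => d_apply_of_not_prefix, d_ne_one⟩
  rintro g (rfl | rfl)
  · refine ⟨a_inv_conj_apply_true_cons d_apply_false, a_inv_conj_apply_singleton d_apply_false
      (d_apply_singleton true), ?_⟩
    simpa using (conj_eq_one_iff (a := a⁻¹)).not.mpr d_ne_one
  · exact ⟨a_conj_apply_true_cons d_apply_false,
      a_conj_apply_singleton d_apply_false (d_apply_singleton true),
      conj_eq_one_iff.not.mpr d_ne_one⟩

end BVTree
end
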